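/- Fix n ≥ 1, observed times U_1,…,U_n > 0, and weights C1_i, C2_i, C3_i ∈ [0,1] with C1_i + C2_i + C3_i = 1 for each i, and suppose Σ_{i=1}^n C1_i > 0, Σ_{i=1}^n C2_i > 0, and Σ_{i=1}^n C3_i > 0. If (θ*, q*, γ*) ∈ (0,∞) × (0,1) × (0,∞) satisfies the three stationarity conditions q* = (Σ C2_i)/(Σ (1 − C1_i)), γ* = (Σ (1 − C2_i))/(Σ U_i), and θ*·Σ (C3_i − 1)U_i + Σ C2_i + θ*·Σ C3_i U_i e^{−θ*U_i}/(1 − e^{−θ*U_i}) = 0, then (θ*, q*, γ*) is a global maximizer of ℓ on (0,∞) × (0,1) × (0,∞), and it is the unique such maximizer. (This establishes that the M-step solutions of Theorem 2 are indeed maximizers of the surrogate.) -/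

import Mathlib

open Real Finset

/-- The EM surrogate (expected complete-data log-likelihood). -/
noncomputable def ell {n : ℕ} (U C1 C2 C3 : Fin n → ℝ) (θ q γ : ℝ) : ℝ :=
  ∑ i, (C1 i * (Real.log γ - γ * U i - θ * U i)
      + C2 i * (Real.log θ - θ * U i - γ * U i + Real.log q)
      + C3 i * (Real.log (1 - q) + Real.log (1 - Real.exp (-θ * U i)) + Real.log γ - γ * U i))

/-! Using `C1 + C2 + C3 = 1`, the surrogate splits into a function of `θ`, one of `q` and one of
`γ`, each of the form `a log x + k x + F x` with `a > 0` and `F` concave: `F = 0` for `γ`,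
`F q = (∑ C3) log (1 - q)` and `F θ = ∑ C3ᵢ log (1 - e^{-θ Uᵢ})`. At a stationary point `xs`,
the tangent lines of `log` and of `F` at `xs` bound such a function by its value at `xs`, strictly
away from `xs` since `log` is strictly concave. -/

namespace Real

theorem log_sub_log_le_div_sub_one {x y : ℝ} (hx : 0 < x) (hy : 0 < y) :
    log x - log y ≤ x / y - 1 := by
  rw [← log_div hx.ne' hy.ne']
  exact log_le_sub_one_of_pos (div_pos hx hy)

theorem log_sub_log_lt_div_sub_one {x y : ℝ} (hx : 0 < x) (hy : 0 < y) (hne : x ≠ y) :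
    log x - log y < x / y - 1 := by
  rw [← log_div hx.ne' hy.ne']
  exact log_lt_sub_one_of_pos (div_pos hx hy) (by rwa [ne_eq, div_eq_one_iff_eq hy.ne'])

theorem log_one_sub_exp_neg_sub_le {s t : ℝ} (hs : 0 < s) (ht : 0 < t) :
    log (1 - exp (-t)) - log (1 - exp (-s)) ≤ (t - s) * (exp (-s) / (1 - exp (-s))) := by
  have hs' : 0 < 1 - exp (-s) := sub_pos.mpr (exp_lt_one_iff.mpr (neg_neg_of_pos hs))
  have ht' : 0 < 1 - exp (-t) := sub_pos.mpr (exp_lt_one_iff.mpr (neg_neg_of_pos ht))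
  have hexp : exp (-s) - exp (-t) ≤ (t - s) * exp (-s) := by
    have : exp (-t) = exp (-s) * exp (s - t) := by rw [← exp_add]; ring_nf
    nlinarith [add_one_le_exp (s - t), exp_pos (-s)]
  calc log (1 - exp (-t)) - log (1 - exp (-s))
      ≤ (1 - exp (-t)) / (1 - exp (-s)) - 1 := log_sub_log_le_div_sub_one ht' hs'
    _ = (exp (-s) - exp (-t)) / (1 - exp (-s)) := by field_simp; ring
    _ ≤ (t - s) * exp (-s) / (1 - exp (-s)) := by gcongr
    _ = (t - s) * (exp (-s) / (1 - exp (-s))) := mul_div_assoc _ _ _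

end Real

theorem mul_log_add_mul_add_lt_of_tangent {a k r x xs : ℝ} {F : ℝ → ℝ} (ha : 0 < a)
    (hx : 0 < x) (hxs : 0 < xs) (hne : x ≠ xs) (hstat : xs * k + a + xs * r = 0)
    (hF : F x - F xs ≤ (x - xs) * r) :
    a * log x + x * k + F x < a * log xs + xs * k + F xs := by
  have hlog : a * (log x - log xs) < a * (x / xs - 1) :=
    mul_lt_mul_of_pos_left (log_sub_log_lt_div_sub_one hx hxs hne) ha
  have htangent : a * (x / xs - 1) = -((x - xs) * (k + r)) := by
    rw [show a = -(xs * (k + r)) by linear_combination hstat]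
    field_simp
  linarith

theorem mul_log_sub_mul_lt {a b x : ℝ} (ha : 0 < a) (hb : 0 < b) (hx : 0 < x)
    (hne : x ≠ a / b) :
    a * log x - b * x < a * log (a / b) - b * (a / b) := by
  have h := mul_log_add_mul_add_lt_of_tangent (k := -b) (r := 0) (F := fun _ => 0) ha hx
    (div_pos ha hb) hne (by field_simp; ring) (by simp)
  linarith

theorem mul_log_add_mul_log_one_sub_lt {a b q : ℝ} (ha : 0 < a) (hb : 0 < b)
    (hq : q ∈ Set.Ioo (0 : ℝ) 1) (hne : q ≠ a / (a + b)) :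
    a * log q + b * log (1 - q) < a * log (a / (a + b)) + b * log (1 - a / (a + b)) := by
  set qs := a / (a + b)
  have hqs : 0 < qs := by positivity
  have hqs1 : 0 < 1 - qs := by
    rw [sub_pos, div_lt_one (by positivity)]
    linarith
  have hF : b * log (1 - q) - b * log (1 - qs) ≤ (q - qs) * (-b / (1 - qs)) := by
    calc b * log (1 - q) - b * log (1 - qs)
        = b * (log (1 - q) - log (1 - qs)) := by ring
      _ ≤ b * ((1 - q) / (1 - qs) - 1) :=
          mul_le_mul_of_nonneg_left
            (log_sub_log_le_div_sub_one (sub_pos.mpr hq.2) hqs1) hb.le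
      _ = (q - qs) * (-b / (1 - qs)) := by field_simp; ring
  have hstat : qs * 0 + a + qs * (-b / (1 - qs)) = 0 := by
    simp only [qs]
    field_simp [hb.ne']
    ring
  have h := mul_log_add_mul_add_lt_of_tangent (F := fun q => b * log (1 - q)) ha hq.1 hqs hne
    hstat hF
  linarith

theorem sum_mul_log_one_sub_exp_sub_le {ι : Type*} [Fintype ι] {U C : ι → ℝ}
    (hU : ∀ i, 0 < U i) (hC : ∀ i, 0 ≤ C i) {θ θs : ℝ} (hθ : 0 < θ) (hθs : 0 < θs) :
    ∑ i, C i * log (1 - exp (-θ * U i)) - ∑ i, C i * log (1 - exp (-θs * U i))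
      ≤ (θ - θs) * ∑ i, C i * U i * exp (-θs * U i) / (1 - exp (-θs * U i)) := by
  rw [← sum_sub_distrib, mul_sum]
  refine sum_le_sum fun i _ => ?_
  have h := mul_le_mul_of_nonneg_left
    (log_one_sub_exp_neg_sub_le (mul_pos hθs (hU i)) (mul_pos hθ (hU i))) (hC i)
  simp only [neg_mul] at h ⊢
  linear_combination h

section Profiles

variable {n : ℕ} (U C2 C3 : Fin n → ℝ)

noncomputable def ellTheta (θ : ℝ) : ℝ :=
  (∑ i, C2 i) * log θ + θ * ∑ i, (C3 i - 1) * U i + ∑ i, C3 i * log (1 - exp (-θ * U i))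

noncomputable def ellQ (q : ℝ) : ℝ :=
  (∑ i, C2 i) * log q + (∑ i, C3 i) * log (1 - q)

noncomputable def ellGamma (γ : ℝ) : ℝ :=
  (∑ i, (1 - C2 i)) * log γ - (∑ i, U i) * γ

end Profiles

theorem ell_eq_add {n : ℕ} {U C1 C2 C3 : Fin n → ℝ} (hsum : ∀ i, C1 i + C2 i + C3 i = 1)
    (θ q γ : ℝ) :
    ell U C1 C2 C3 θ q γ = ellTheta U C2 C3 θ + ellQ C2 C3 q + ellGamma U C2 γ := by
  simp only [ell, ellTheta, ellQ, ellGamma, sum_mul, mul_sum, ← sum_add_distrib,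
    ← sum_sub_distrib]
  exact sum_congr rfl fun i _ => by linear_combination (log γ - γ * U i - θ * U i) * hsum i

theorem add_add_lt_add_add_of_ne {α β γ : Type*} {f : α → ℝ} {g : β → ℝ} {h : γ → ℝ}
    {x xs : α} {y ys : β} {z zs : γ} (hf : x ≠ xs → f x < f xs) (hg : y ≠ ys → g y < g ys)
    (hh : z ≠ zs → h z < h zs) (hne : (x, y, z) ≠ (xs, ys, zs)) :
    f x + g y + h z < f xs + g ys + h zs := by
  have hg' : g y ≤ g ys := by
    rcases eq_or_ne y ys with rfl | hy
    exacts [le_rfl, (hg hy).le]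
  have hh' : h z ≤ h zs := by
    rcases eq_or_ne z zs with rfl | hz
    exacts [le_rfl, (hh hz).le]
  rcases eq_or_ne x xs with rfl | hx
  · rcases eq_or_ne y ys with rfl | hy
    · have hz : z ≠ zs := fun hz => hne (by rw [hz])
      linarith [hh hz]
    · linarith [hg hy]
  · linarith [hf hx]

theorem EM_Mstep_global_maximizer_general {n : ℕ} (hn : 1 ≤ n) (U C1 C2 C3 : Fin n → ℝ)
    (hU : ∀ i, 0 < U i)
    (hC3 : ∀ i, C3 i ∈ Set.Icc (0 : ℝ) 1) (hsum : ∀ i, C1 i + C2 i + C3 i = 1)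
    (hS1 : 0 < ∑ i, C1 i) (hS2 : 0 < ∑ i, C2 i) (hS3 : 0 < ∑ i, C3 i)
    (θs qs γs : ℝ) (hθs : 0 < θs)
    (hq_eq : qs = (∑ i, C2 i) / (∑ i, (1 - C1 i)))
    (hγ_eq : γs = (∑ i, (1 - C2 i)) / (∑ i, U i))
    (hθ_eq : θs * (∑ i, (C3 i - 1) * U i) + (∑ i, C2 i)
        + θs * ∑ i, C3 i * U i * Real.exp (-θs * U i) / (1 - Real.exp (-θs * U i)) = 0) :
    (∀ θ q γ : ℝ, 0 < θ → q ∈ Set.Ioo (0 : ℝ) 1 → 0 < γ →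
        ell U C1 C2 C3 θ q γ ≤ ell U C1 C2 C3 θs qs γs) ∧
    (∀ θ q γ : ℝ, 0 < θ → q ∈ Set.Ioo (0 : ℝ) 1 → 0 < γ →
        (θ, q, γ) ≠ (θs, qs, γs) →
        ell U C1 C2 C3 θ q γ < ell U C1 C2 C3 θs qs γs) := by
  have hqs_eq : qs = (∑ i, C2 i) / ((∑ i, C2 i) + ∑ i, C3 i) := by
    rw [hq_eq, ← sum_add_distrib]
    exact congrArg _ (sum_congr rfl fun i _ => by linarith [hsum i])
  have hS1S3 : 0 < ∑ i, (1 - C2 i) := by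
    rw [show ∑ i, (1 - C2 i) = ∑ i, C1 i + ∑ i, C3 i by
      rw [← sum_add_distrib]; exact sum_congr rfl fun i _ => by linarith [hsum i]]
    positivity
  have hSU : 0 < ∑ i, U i := sum_pos (fun i _ => hU i) ⟨⟨0, hn⟩, mem_univ _⟩
  have hlt : ∀ θ q γ : ℝ, 0 < θ → q ∈ Set.Ioo (0 : ℝ) 1 → 0 < γ →
      (θ, q, γ) ≠ (θs, qs, γs) → ell U C1 C2 C3 θ q γ < ell U C1 C2 C3 θs qs γs := by
    intro θ q γ hθ hq hγ hne
    rw [ell_eq_add hsum, ell_eq_add hsum]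
    refine add_add_lt_add_add_of_ne (fun hθne => ?_) (fun hqne => ?_) (fun hγne => ?_) hne
    · exact mul_log_add_mul_add_lt_of_tangent
        (F := fun θ => ∑ i, C3 i * log (1 - exp (-θ * U i))) hS2 hθ hθs hθne hθ_eq
        (sum_mul_log_one_sub_exp_sub_le hU (fun i => (hC3 i).1) hθ hθs)
    · rw [hqs_eq] at hqne ⊢
      exact mul_log_add_mul_log_one_sub_lt hS2 hS3 hq hqne
    · rw [hγ_eq] at hγne ⊢
      exact mul_log_sub_mul_lt hS1S3 hSU hγ hγne
  refine ⟨fun θ q γ hθ hq hγ => ?_, hlt⟩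
  rcases eq_or_ne (θ, q, γ) (θs, qs, γs) with h | h
  · simp only [Prod.mk.injEq] at h
    rw [h.1, h.2.1, h.2.2]
  · exact (hlt θ q γ hθ hq hγ h).le

/-- The M-step solutions of Theorem 2 are the unique global maximizer of the surrogate: if
`(θ*, q*, γ*)` lies in `(0,∞) × (0,1) × (0,∞)` and satisfies the three stationarity
conditions, then it is a global maximizer of `ℓ` on that domain and is the unique one. -/
theorem EM_Mstep_global_maximizer {n : ℕ} (hn : 1 ≤ n) (U C1 C2 C3 : Fin n → ℝ)
    (hU : ∀ i, 0 < U i)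
    (hC1 : ∀ i, C1 i ∈ Set.Icc (0 : ℝ) 1) (hC2 : ∀ i, C2 i ∈ Set.Icc (0 : ℝ) 1)
    (hC3 : ∀ i, C3 i ∈ Set.Icc (0 : ℝ) 1) (hsum : ∀ i, C1 i + C2 i + C3 i = 1)
    (hS1 : 0 < ∑ i, C1 i) (hS2 : 0 < ∑ i, C2 i) (hS3 : 0 < ∑ i, C3 i)
    (θs qs γs : ℝ) (hθs : 0 < θs) (hqs : qs ∈ Set.Ioo (0 : ℝ) 1) (hγs : 0 < γs)
    (hq_eq : qs = (∑ i, C2 i) / (∑ i, (1 - C1 i)))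
    (hγ_eq : γs = (∑ i, (1 - C2 i)) / (∑ i, U i))
    (hθ_eq : θs * (∑ i, (C3 i - 1) * U i) + (∑ i, C2 i)
        + θs * ∑ i, C3 i * U i * Real.exp (-θs * U i) / (1 - Real.exp (-θs * U i)) = 0) :
    (∀ θ q γ : ℝ, 0 < θ → q ∈ Set.Ioo (0 : ℝ) 1 → 0 < γ →
        ell U C1 C2 C3 θ q γ ≤ ell U C1 C2 C3 θs qs γs) ∧
    (∀ θ q γ : ℝ, 0 < θ → q ∈ Set.Ioo (0 : ℝ) 1 → 0 < γ →
        (θ, q, γ) ≠ (θs, qs, γs) →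
        ell U C1 C2 C3 θ q γ < ell U C1 C2 C3 θs qs γs) :=
  EM_Mstep_global_maximizer_general hn U C1 C2 C3 hU hC3 hsum hS1 hS2 hS3 θs qs γs hθs hq_eq hγ_eq
    hθ_eq
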